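/- Let z, r : ℝ × ℝ → ℂ be smooth functions solving the Mikhailov–Lenells system. Define p = (1/2)(−3/2 + (√3/2)i) z − (1/2)(3/2 + (√3/2)i) r and q = −(1/2)(1/2 + (√3/2)i) z + (1/2)(−1/2 + (√3/2)i) r. Then (p, q) solves the (complex-valued) modified Boussinesq system: p_t = 2(pq)_x + q_{xx} and q_t = −(1/3) p_{xx} + (2/3) p p_x − 2 q q_x. -/

import Mathlib

open Complex

/-- Partial derivative in the first (space) variable, for complex-valued functions. -/
noncomputable def pdx (f : ℝ → ℝ → ℂ) : ℝ → ℝ → ℂ := fun x t => deriv (fun x' => f x' t) x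

/-- Partial derivative in the second (time) variable, for complex-valued functions. -/
noncomputable def pdt (f : ℝ → ℝ → ℂ) : ℝ → ℝ → ℂ := fun x t => deriv (fun t' => f x t') t

/-- The Mikhailov–Lenells system for complex-valued functions z, r. -/
def MikhailovLenells (z r : ℝ → ℝ → ℂ) : Prop :=
  ∀ x t : ℝ,
    I * pdt z x t + ((Real.sqrt 3 : ℂ)/3) * pdx (pdx z) x t
      + 2 * I * r x t * pdx r x t = 0 ∧
    I * pdt r x t - ((Real.sqrt 3 : ℂ)/3) * pdx (pdx r) x t
      + 2 * I * z x t * pdx z x t = 0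

/-- The (complex-valued) modified Boussinesq system. -/
def ModifiedBoussinesqC (p q : ℝ → ℝ → ℂ) : Prop :=
  ∀ x t : ℝ,
    pdt p x t = 2 * pdx (fun x t => p x t * q x t) x t + pdx (pdx q) x t ∧
    pdt q x t = -(1/3) * pdx (pdx p) x t + (2/3) * p x t * pdx p x t
      - 2 * q x t * pdx q x t

/-- The linear transformation from the Mikhailov–Lenells system to the
modified Boussinesq system. -/
theorem ML_to_MB (z r : ℝ → ℝ → ℂ)
    (hz : ContDiff ℝ (⊤ : ℕ∞) (fun s : ℝ × ℝ => z s.1 s.2))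
    (hr : ContDiff ℝ (⊤ : ℕ∞) (fun s : ℝ × ℝ => r s.1 s.2))
    (hML : MikhailovLenells z r) :
    ModifiedBoussinesqC
      (fun x t => (1/2) * (-(3/2) + ((Real.sqrt 3 : ℂ)/2) * I) * z x t
        - (1/2) * (3/2 + ((Real.sqrt 3 : ℂ)/2) * I) * r x t)
      (fun x t => -(1/2) * (1/2 + ((Real.sqrt 3 : ℂ)/2) * I) * z x t
        + (1/2) * (-(1/2) + ((Real.sqrt 3 : ℂ)/2) * I) * r x t) := by
  have hs : ((Real.sqrt 3 : ℝ) : ℂ) ^ 2 = 3 := by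
    rw [← Complex.ofReal_pow, Real.sq_sqrt (by norm_num : (0:ℝ) ≤ 3)]
    norm_num
  intro x t
  obtain ⟨h1, h2⟩ := hML x t
  have hzx : ContDiff ℝ ((⊤ : ℕ∞) : WithTop ℕ∞) (fun x' : ℝ => z x' t) :=
    (hz.of_le (by simp)).comp (contDiff_id.prodMk contDiff_const)
  have hrx : ContDiff ℝ ((⊤ : ℕ∞) : WithTop ℕ∞) (fun x' : ℝ => r x' t) :=
    (hr.of_le (by simp)).comp (contDiff_id.prodMk contDiff_const)
  have hzt : ContDiff ℝ ((⊤ : ℕ∞) : WithTop ℕ∞) (fun t' : ℝ => z x t') :=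
    (hz.of_le (by simp)).comp (contDiff_const.prodMk contDiff_id)
  have hrt : ContDiff ℝ ((⊤ : ℕ∞) : WithTop ℕ∞) (fun t' : ℝ => r x t') :=
    (hr.of_le (by simp)).comp (contDiff_const.prodMk contDiff_id)
  have Hzx : ∀ u : ℝ, HasDerivAt (fun x' => z x' t) (deriv (fun x' => z x' t) u) u :=
    fun u => (hzx.differentiable (by simp) u).hasDerivAt
  have Hrx : ∀ u : ℝ, HasDerivAt (fun x' => r x' t) (deriv (fun x' => r x' t) u) u :=
    fun u => (hrx.differentiable (by simp) u).hasDerivAt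
  have Hzx2 : ∀ u : ℝ, HasDerivAt (fun x' => deriv (fun x'' => z x'' t) x')
      (deriv (fun x' => deriv (fun x'' => z x'' t) x') u) u :=
    fun u => (((contDiff_infty_iff_deriv.mp hzx).2.differentiable (by simp)) u).hasDerivAt
  have Hrx2 : ∀ u : ℝ, HasDerivAt (fun x' => deriv (fun x'' => r x'' t) x')
      (deriv (fun x' => deriv (fun x'' => r x'' t) x') u) u :=
    fun u => (((contDiff_infty_iff_deriv.mp hrx).2.differentiable (by simp)) u).hasDerivAt
  have Hzt : HasDerivAt (fun t' => z x t') (deriv (fun t' => z x t') t) t :=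
    (hzt.differentiable (by simp) t).hasDerivAt
  have Hrt : HasDerivAt (fun t' => r x t') (deriv (fun t' => r x t') t) t :=
    (hrt.differentiable (by simp) t).hasDerivAt
  simp only [pdx, pdt] at h1 h2 ⊢
  set Z := z x t with hZdef
  set R := r x t with hRdef
  set Zx := deriv (fun x' => z x' t) x with hZxdef
  set Rx := deriv (fun x' => r x' t) x with hRxdef
  set Zxx := deriv (fun x' => deriv (fun x'' => z x'' t) x') x with hZxxdef
  set Rxx := deriv (fun x' => deriv (fun x'' => r x'' t) x') x with hRxxdef
  set Zt := deriv (fun t' => z x t') t with hZtdef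
  set Rt := deriv (fun t' => r x t') t with hRtdef
  have hpt : HasDerivAt (fun t' => (1/2) * (-(3/2) + ((Real.sqrt 3 : ℂ)/2) * I) * z x t'
        - (1/2) * (3/2 + ((Real.sqrt 3 : ℂ)/2) * I) * r x t')
      ((1/2) * (-(3/2) + ((Real.sqrt 3 : ℂ)/2) * I) * Zt
        - (1/2) * (3/2 + ((Real.sqrt 3 : ℂ)/2) * I) * Rt) t :=
    (Hzt.const_mul _).sub (Hrt.const_mul _)
  have hqt : HasDerivAt (fun t' => -(1/2) * (1/2 + ((Real.sqrt 3 : ℂ)/2) * I) * z x t'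
        + (1/2) * (-(1/2) + ((Real.sqrt 3 : ℂ)/2) * I) * r x t')
      (-(1/2) * (1/2 + ((Real.sqrt 3 : ℂ)/2) * I) * Zt
        + (1/2) * (-(1/2) + ((Real.sqrt 3 : ℂ)/2) * I) * Rt) t :=
    (Hzt.const_mul _).add (Hrt.const_mul _)
  have hpx : HasDerivAt (fun x' => (1/2) * (-(3/2) + ((Real.sqrt 3 : ℂ)/2) * I) * z x' t
        - (1/2) * (3/2 + ((Real.sqrt 3 : ℂ)/2) * I) * r x' t)
      ((1/2) * (-(3/2) + ((Real.sqrt 3 : ℂ)/2) * I) * Zx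
        - (1/2) * (3/2 + ((Real.sqrt 3 : ℂ)/2) * I) * Rx) x :=
    ((Hzx x).const_mul _).sub ((Hrx x).const_mul _)
  have hqx : HasDerivAt (fun x' => -(1/2) * (1/2 + ((Real.sqrt 3 : ℂ)/2) * I) * z x' t
        + (1/2) * (-(1/2) + ((Real.sqrt 3 : ℂ)/2) * I) * r x' t)
      (-(1/2) * (1/2 + ((Real.sqrt 3 : ℂ)/2) * I) * Zx
        + (1/2) * (-(1/2) + ((Real.sqrt 3 : ℂ)/2) * I) * Rx) x :=
    ((Hzx x).const_mul _).add ((Hrx x).const_mul _)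
  have hpq : HasDerivAt (fun x' =>
        ((1/2) * (-(3/2) + ((Real.sqrt 3 : ℂ)/2) * I) * z x' t
          - (1/2) * (3/2 + ((Real.sqrt 3 : ℂ)/2) * I) * r x' t) *
        (-(1/2) * (1/2 + ((Real.sqrt 3 : ℂ)/2) * I) * z x' t
          + (1/2) * (-(1/2) + ((Real.sqrt 3 : ℂ)/2) * I) * r x' t))
      (((1/2) * (-(3/2) + ((Real.sqrt 3 : ℂ)/2) * I) * Zx
          - (1/2) * (3/2 + ((Real.sqrt 3 : ℂ)/2) * I) * Rx) *
        (-(1/2) * (1/2 + ((Real.sqrt 3 : ℂ)/2) * I) * Z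
          + (1/2) * (-(1/2) + ((Real.sqrt 3 : ℂ)/2) * I) * R) +
       ((1/2) * (-(3/2) + ((Real.sqrt 3 : ℂ)/2) * I) * Z
          - (1/2) * (3/2 + ((Real.sqrt 3 : ℂ)/2) * I) * R) *
        (-(1/2) * (1/2 + ((Real.sqrt 3 : ℂ)/2) * I) * Zx
          + (1/2) * (-(1/2) + ((Real.sqrt 3 : ℂ)/2) * I) * Rx)) x :=
    hpx.mul hqx
  have hq1 : (fun x' => deriv (fun x'' => -(1/2) * (1/2 + ((Real.sqrt 3 : ℂ)/2) * I) * z x'' t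
        + (1/2) * (-(1/2) + ((Real.sqrt 3 : ℂ)/2) * I) * r x'' t) x')
      = (fun x' => -(1/2) * (1/2 + ((Real.sqrt 3 : ℂ)/2) * I) * deriv (fun x'' => z x'' t) x'
        + (1/2) * (-(1/2) + ((Real.sqrt 3 : ℂ)/2) * I) * deriv (fun x'' => r x'' t) x') :=
    funext fun u => (((Hzx u).const_mul _).add ((Hrx u).const_mul _)).deriv
  have hqxx : HasDerivAt
      (fun x' => -(1/2) * (1/2 + ((Real.sqrt 3 : ℂ)/2) * I) * deriv (fun x'' => z x'' t) x'
        + (1/2) * (-(1/2) + ((Real.sqrt 3 : ℂ)/2) * I) * deriv (fun x'' => r x'' t) x')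
      (-(1/2) * (1/2 + ((Real.sqrt 3 : ℂ)/2) * I) * Zxx
        + (1/2) * (-(1/2) + ((Real.sqrt 3 : ℂ)/2) * I) * Rxx) x :=
    ((Hzx2 x).const_mul _).add ((Hrx2 x).const_mul _)
  have hp1 : (fun x' => deriv (fun x'' => (1/2) * (-(3/2) + ((Real.sqrt 3 : ℂ)/2) * I) * z x'' t
        - (1/2) * (3/2 + ((Real.sqrt 3 : ℂ)/2) * I) * r x'' t) x')
      = (fun x' => (1/2) * (-(3/2) + ((Real.sqrt 3 : ℂ)/2) * I) * deriv (fun x'' => z x'' t) x'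
        - (1/2) * (3/2 + ((Real.sqrt 3 : ℂ)/2) * I) * deriv (fun x'' => r x'' t) x') :=
    funext fun u => (((Hzx u).const_mul _).sub ((Hrx u).const_mul _)).deriv
  have hpxx : HasDerivAt
      (fun x' => (1/2) * (-(3/2) + ((Real.sqrt 3 : ℂ)/2) * I) * deriv (fun x'' => z x'' t) x'
        - (1/2) * (3/2 + ((Real.sqrt 3 : ℂ)/2) * I) * deriv (fun x'' => r x'' t) x')
      ((1/2) * (-(3/2) + ((Real.sqrt 3 : ℂ)/2) * I) * Zxx
        - (1/2) * (3/2 + ((Real.sqrt 3 : ℂ)/2) * I) * Rxx) x :=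
    ((Hzx2 x).const_mul _).sub ((Hrx2 x).const_mul _)
  constructor
  · rw [hpt.deriv, hpq.deriv, hq1, hqxx.deriv]
    linear_combination (I * (3/4) + ((Real.sqrt 3 : ℂ))/4) * h1
      + (I * (3/4) - ((Real.sqrt 3 : ℂ))/4) * h2
      + (-(1/12) * Rxx - (1/12) * Zxx - (1/4) * R * Rx + (1/4) * R * Zx
          + (1/4) * Z * Rx - (1/4) * Z * Zx) * hs
      + (((Real.sqrt 3 : ℂ))^2 * (R * Rx - R * Zx - Rx * Z + Z * Zx) * (1/4)
          - (3/4) * Zt - (3/4) * Rt - (3/2) * R * Rx - (3/2) * Z * Zx) * Complex.I_sq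
  · rw [hqt.deriv, hp1, hpxx.deriv, hpx.deriv, hqx.deriv]
    linear_combination (I * (1/4) - ((Real.sqrt 3 : ℂ))/4) * h1
      + (I * (1/4) + ((Real.sqrt 3 : ℂ))/4) * h2
      + ((1/12) * Rxx + (1/12) * Zxx - (1/12) * R * Rx + (1/12) * R * Zx
          + (1/12) * Z * Rx - (1/12) * Z * Zx) * hs
      + (((Real.sqrt 3 : ℂ))^2 * (R * Rx - R * Zx - Rx * Z + Z * Zx) * (1/12)
          - (1/4) * Zt - (1/4) * Rt - (1/2) * R * Rx - (1/2) * Z * Zx) * Complex.I_sq
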